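/- Let C be a small category equipped with a Grothendieck topology J, let F : Cᵒᵖ ⥤ Type be a presheaf, let p : CostructuredArrow yoneda F ⥤ C be the projection, and let K be the slice topology J_{/F}. Then: (a) for every J-sheaf G : Cᵒᵖ ⥤ Type, the restricted presheaf p.op ⋙ G is a K-sheaf on CostructuredArrow yoneda F; and (b) for every K-sheaf H : (CostructuredArrow yoneda F)ᵒᵖ ⥤ Type, any pointwise right Kan extension of H along p.op is a J-sheaf on C. -/

import Mathlib

/-!
The projection `p` from the slice is continuous and cocontinuous for `J_{/F}` and `J`:
cocontinuity is the definition of the slice topology, and continuity holds because every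
map `V ⟶ p(U)` lifts to the slice (give `V` the induced element of `F`), so that `p` pushes
`S.functorPullback p` forward onto `S` and carries compatible families to compatible families.
Restriction along a continuous functor preserves sheaves, and right Kan extension along a
cocontinuous one does (SGA 4 III 2.2).
-/

open CategoryTheory Limits

universe u w

namespace CategoryTheory

theorem Presheaf.isSheaf_of_isPointwiseRightKanExtension {C D : Type*} [Category* C]
    [Category* D] {J : GrothendieckTopology C} {K : GrothendieckTopology D} (G : C ⥤ D)
    [G.IsCocontinuous J K] {A : Type*} [Category* A] {F : Cᵒᵖ ⥤ A} (hF : IsSheaf J F)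
    {R : Dᵒᵖ ⥤ A} {α : G.op ⋙ R ⟶ F}
    (hα : (Functor.RightExtension.mk R α).IsPointwiseRightKanExtension) : IsSheaf K R := by
  rw [isSheaf_iff_multifork]
  exact fun _ S => ⟨RanIsSheafOfIsCocontinuous.isLimitMultifork hF hα S⟩

namespace CostructuredArrow

variable {C D : Type*} [Category* C] [Category* D] {S : C ⥤ D} {X : D}

lemma le_functorPushforward_proj_functorPullback {U : CostructuredArrow S X}
    (R : Sieve U.left) : R ≤ (R.functorPullback (proj S X)).functorPushforward (proj S X) :=
  fun Y f hf => ⟨mk (S.map f ≫ U.hom), homMk f rfl, 𝟙 Y, hf, (Category.id_comp f).symm⟩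

lemma proj_compatiblePreserving (J : GrothendieckTopology C) :
    CompatiblePreserving.{w} J (proj S X) where
  compatible := by
    intro _ _ _ _ hx Y₁ Y₂ V (f₁ : V ⟶ Y₁.left) (f₂ : V ⟶ Y₂.left) g₁ g₂ hg₁ hg₂
      (h : f₁ ≫ g₁.left = f₂ ≫ g₂.left)
    have hW : S.map f₂ ≫ Y₂.hom = S.map f₁ ≫ Y₁.hom := by
      rw [← w g₁, ← w g₂, ← S.map_comp_assoc, ← S.map_comp_assoc, h]
    exact hx (homMk f₁ rfl : mk (S.map f₁ ≫ Y₁.hom) ⟶ Y₁) (homMk f₂ hW) hg₁ hg₂ (hom_ext _ _ h)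

variable {J : GrothendieckTopology C} {K : GrothendieckTopology (CostructuredArrow S X)}

lemma proj_coverPreserving
    (hK : ∀ U (T : Sieve U), T ∈ K U → ∃ R ∈ J U.left, T = R.functorPullback (proj S X)) :
    CoverPreserving K J (proj S X) where
  cover_preserve {U T} hT := by
    obtain ⟨R, hR, rfl⟩ := hK U T hT
    exact J.superset_covering (le_functorPushforward_proj_functorPullback R) hR

lemma proj_isContinuous
    (hK : ∀ U (T : Sieve U), T ∈ K U → ∃ R ∈ J U.left, T = R.functorPullback (proj S X)) :
    (proj S X).IsContinuous K J :=
  Functor.isContinuous_of_coverPreserving (proj_compatiblePreserving J) (proj_coverPreserving hK)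

end CostructuredArrow

end CategoryTheory

theorem statement5 {C : Type u} [SmallCategory C] (J : GrothendieckTopology C)
    (F : Cᵒᵖ ⥤ Type u)
    (K : GrothendieckTopology (CostructuredArrow yoneda F))
    (hK : ∀ (U : CostructuredArrow yoneda F) (T : Sieve U),
      T ∈ K U ↔
        ∃ S ∈ J ((CostructuredArrow.proj yoneda F).obj U),
          T = S.functorPullback (CostructuredArrow.proj yoneda F)) :
    (∀ G : Cᵒᵖ ⥤ Type u, Presieve.IsSheaf J G →
        Presieve.IsSheaf K ((CostructuredArrow.proj yoneda F).op ⋙ G)) ∧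
      (∀ H : (CostructuredArrow yoneda F)ᵒᵖ ⥤ Type u, Presieve.IsSheaf K H →
        ∀ (H' : Cᵒᵖ ⥤ Type u) (α : (CostructuredArrow.proj yoneda F).op ⋙ H' ⟶ H),
          (Functor.RightExtension.mk H' α).IsPointwiseRightKanExtension →
            Presieve.IsSheaf J H') := by
  have : (CostructuredArrow.proj yoneda F).IsContinuous K J :=
    CostructuredArrow.proj_isContinuous fun U T => (hK U T).1
  have : (CostructuredArrow.proj yoneda F).IsCocontinuous K J :=
    ⟨fun hS => (hK _ _).2 ⟨_, hS, rfl⟩⟩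
  refine ⟨fun G hG => ?_, fun H hH H' α hα => ?_⟩
  · exact Functor.op_comp_isSheaf_of_types _ K J ⟨G, (isSheaf_iff_isSheaf_of_type J G).2 hG⟩
  · rw [← isSheaf_iff_isSheaf_of_type] at hH ⊢
    exact Presheaf.isSheaf_of_isPointwiseRightKanExtension _ hH hα
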